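/- Let λ be a Young diagram, v_i its content multiplicities, and let (λ^{−r}, …, λ^s) be a tuple of partitions that interlace according to the shape of λ (meaning: if τ_λ(i) = + then λ^i ≻ λ^{i+1}, if τ_λ(i) = − then λ^i ≺ λ^{i+1}, and each λ^i has at most v_i parts; here μ ≻ ν means μ_1 ≥ ν_1 ≥ μ_2 ≥ ν_2 ≥ …). Define σ̂_λ(i) = v_{i−1} − v_i + δ_{i,0}. Then Σ_{i=−r}^{s−1} Σ_{j=1}^{v_i} Σ_{k : j <_{τ(i)} k, 1 ≤ k ≤ v_{i+1}} (λ^i_j − λ^{i+1}_k) + Σ_{i=−r}^{s} Σ_{1 ≤ j < k ≤ v_i} (λ^i_k − λ^i_j) = − Σ_{i=−r}^{s} σ̂_λ(i) |λ^i|, where <_− is strict inequality < and <_+ is ≤. -/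

import Mathlib

/-!
Both sides are linear in the parts `λ^i_j`, so it suffices to compare coefficients. Along the
diagonals of a Young diagram the multiplicities move by at most one, and `τ_λ` records the move:
`v_{i+1} + [τ(i) = +] = v_i + [i < 0]`. Counting pairs in the double sums, `λ^i_j` receives
`v_i + [i < 0] - j` from the cross sum at level `i`, `-(j - 1 + [τ(i-1) = +])` from the cross sum
at level `i - 1`, and `2j - 1 - v_i` from the sum within level `i`; by the step relation at
`i - 1` these add up to `-σ̂_λ(i)`. The boundary terms vanish since `v_{-r-1} = v_{s+1} = 0`.
-/

open Finset

noncomputable def contentMultiplicity (lam : ℕ → ℕ) (c : ℤ) : ℕ :=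
  Nat.card {p : ℕ × ℕ | 1 ≤ p.1 ∧ 1 ≤ p.2 ∧ p.2 ≤ lam p.1 ∧ (p.2 : ℤ) - p.1 = c}

-- The box of content `c` in row `a` is `(a, a + c)`.
def contentRows (lam : ℕ → ℕ) (N : ℕ) (c : ℤ) : Finset ℕ :=
  {a ∈ Icc 1 N | 1 ≤ (a : ℤ) + c ∧ (a : ℤ) + c ≤ lam a}

namespace contentRows

variable {lam : ℕ → ℕ} {N : ℕ} {c : ℤ}

theorem succ_subset (hc : 0 ≤ c) : contentRows lam N (c + 1) ⊆ contentRows lam N c := by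
  intro a
  simp only [contentRows, mem_filter, mem_Icc]
  omega

-- Moving one row up maps the box `(a, a + c)` to `(a - 1, a + c)`, of content `c + 1`.
theorem subset_insert_image_succ (hanti : Antitone lam) (hc : 0 ≤ c) :
    contentRows lam N c ⊆ insert 1 ((contentRows lam N (c + 1)).image (· + 1)) := by
  intro a ha
  rw [mem_insert, mem_image]
  have := hanti (Nat.sub_le a 1)
  simp only [contentRows, mem_filter, mem_Icc] at ha ⊢
  exact (eq_or_ne a 1).imp id fun ha1 => ⟨a - 1, by omega, by omega⟩

theorem subset_image_succ (hanti : Antitone lam) (hc : c < 0) :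
    contentRows lam N c ⊆ (contentRows lam N (c + 1)).image (· + 1) := by
  intro a ha
  rw [mem_image]
  have := hanti (Nat.sub_le a 1)
  simp only [contentRows, mem_filter, mem_Icc] at ha ⊢
  exact ⟨a - 1, by omega, by omega⟩

theorem succ_subset_insert (hc : c < 0) :
    contentRows lam N (c + 1) ⊆ insert (-c).toNat (contentRows lam N c) := by
  intro a
  simp only [contentRows, mem_insert, mem_filter, mem_Icc]
  omega

end contentRows

section contentMultiplicity

variable {lam : ℕ → ℕ}

theorem contentMultiplicity_eq_card_contentRows (hanti : Antitone lam) {N : ℕ}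
    (hN : lam N = 0) (c : ℤ) : contentMultiplicity lam c = (contentRows lam N c).card := by
  have himage : {p : ℕ × ℕ | 1 ≤ p.1 ∧ 1 ≤ p.2 ∧ p.2 ≤ lam p.1 ∧ (p.2 : ℤ) - p.1 = c} =
      (fun a : ℕ => (a, (a + c).toNat)) '' ↑(contentRows lam N c) := by
    ext ⟨a, b⟩
    simp only [contentRows, Set.mem_ofPred_eq, Set.mem_image, Finset.coe_filter, mem_Icc,
      Prod.mk.injEq]
    constructor
    · rintro ⟨ha, hb, hba, rfl⟩
      have haN : a ≤ N := by
        by_contra! h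
        have := hanti h.le
        omega
      exact ⟨a, ⟨⟨ha, haN⟩, by omega, by omega⟩, rfl, by omega⟩
    · rintro ⟨a, ⟨⟨ha, -⟩, hc1, hc2⟩, rfl, rfl⟩
      omega
  rw [contentMultiplicity, himage, Nat.card_coe_set_eq,
    Set.InjOn.ncard_image fun _ _ _ _ h => congrArg Prod.fst h, Set.ncard_coe_finset]

theorem contentMultiplicity_succ_le (hanti : Antitone lam) (hfin : ∃ N, lam N = 0) (c : ℤ) :
    contentMultiplicity lam (c + 1) ≤ contentMultiplicity lam c + if c < 0 then 1 else 0 := by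
  obtain ⟨N, hN⟩ := hfin
  simp only [contentMultiplicity_eq_card_contentRows hanti hN]
  split_ifs with hc
  · exact (card_le_card (contentRows.succ_subset_insert hc)).trans (card_insert_le _ _)
  · exact card_le_card (contentRows.succ_subset (not_lt.mp hc))

theorem le_contentMultiplicity_succ (hanti : Antitone lam) (hfin : ∃ N, lam N = 0) (c : ℤ) :
    contentMultiplicity lam c + (if c < 0 then 1 else 0) ≤
      contentMultiplicity lam (c + 1) + 1 := by
  obtain ⟨N, hN⟩ := hfin
  simp only [contentMultiplicity_eq_card_contentRows hanti hN]
  split_ifs with hc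
  · exact Nat.add_le_add_right
      ((card_le_card (contentRows.subset_image_succ hanti hc)).trans card_image_le) 1
  · exact (card_le_card (contentRows.subset_insert_image_succ hanti (not_lt.mp hc))).trans
      ((card_insert_le _ _).trans (Nat.add_le_add_right card_image_le 1))

end contentMultiplicity

theorem sum_Icc_sub_succ_eq {f g : ℤ → ℤ} {a b : ℤ} (hab : a ≤ b) :
    ∑ i ∈ Icc a (b - 1), (f i - g (i + 1)) = ∑ i ∈ Icc a b, (f i - g i) - f b + g a := by
  have hf : ∑ i ∈ Icc a b, f i = ∑ i ∈ Icc a (b - 1), f i + f b := by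
    conv_lhs => rw [← sub_add_cancel b 1]
    rw [← insert_Icc_right_eq_Icc_add_one (by omega), sum_insert (by simp), sub_add_cancel,
      add_comm]
  have hg : ∑ i ∈ Icc a b, g i = g a + ∑ i ∈ Icc a (b - 1), g (i + 1) := by
    rw [← insert_Icc_add_one_left_eq_Icc hab, sum_insert (by simp),
      show Icc (a + 1) b = (Icc a (b - 1)).map (addRightEmbedding 1) by
        rw [map_add_right_Icc, sub_add_cancel], sum_map]
    rfl
  rw [sum_sub_distrib, sum_sub_distrib, hf, hg]
  ring

theorem sum_Icc_sum_Icc_ite_lt_add {a b e : ℕ} (he : e ≤ 1) (hab : a ≤ b + e)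
    (hba : b + e ≤ a + 1) (P Q : ℕ → ℤ) :
    ∑ j ∈ Icc 1 a, ∑ k ∈ Icc 1 b, (if j < k + e then P j - Q k else 0) =
      ∑ j ∈ Icc 1 a, ((b : ℤ) + e - j) * P j -
        ∑ k ∈ Icc 1 b, ((k : ℤ) + e - 1) * Q k := by
  have hsplit : ∀ j k : ℕ, (if j < k + e then P j - Q k else 0) =
      (if j < k + e then 1 else 0) * P j - (if j < k + e then 1 else 0) * Q k := by
    intro j k; split_ifs <;> ring
  simp_rw [hsplit, sum_sub_distrib, ← sum_mul]
  rw [sum_comm (f := fun j k => (if j < k + e then (1 : ℤ) else 0) * Q k)]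
  simp_rw [← sum_mul, sum_boole]
  congr 1 <;> refine sum_congr rfl fun j hj => ?_ <;> rw [mem_Icc] at hj <;> congr 1
  · rw [show {k ∈ Icc 1 b | j < k + e} = Icc (j + 1 - e) b by ext; simp; omega, Nat.card_Icc]
    omega
  · rw [show {k ∈ Icc 1 a | k < j + e} = Icc 1 (j + e - 1) by ext; simp; omega, Nat.card_Icc]
    omega

theorem sum_Icc_sum_Icc_ite_lt_sub (a : ℕ) (P : ℕ → ℤ) :
    ∑ j ∈ Icc 1 a, ∑ k ∈ Icc 1 a, (if j < k then P k - P j else 0) =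
      ∑ j ∈ Icc 1 a, (2 * (j : ℤ) - 1 - a) * P j := by
  have h := sum_Icc_sum_Icc_ite_lt_add zero_le_one le_rfl (Nat.le_succ a) (-P) (-P)
  simp only [add_zero, Nat.cast_zero, Pi.neg_apply, neg_sub_neg] at h
  rw [h, ← sum_sub_distrib]
  exact sum_congr rfl fun j _ => by ring

theorem sum_Icc_sum_Icc_ite_interlace {a b d : ℕ} {t : Bool} (hd : d ≤ 1)
    (hstep : b + (if t then 1 else 0) = a + d) (P Q : ℕ → ℤ) :
    ∑ j ∈ Icc 1 a, ∑ k ∈ Icc 1 b,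
        (if (t = true ∧ j ≤ k) ∨ (t = false ∧ j < k) then P j - Q k else 0) =
      ∑ j ∈ Icc 1 a, ((a : ℤ) + d - j) * P j -
        ∑ k ∈ Icc 1 b, ((k : ℤ) + (if t then 1 else 0) - 1) * Q k := by
  have h := sum_Icc_sum_Icc_ite_lt_add (a := a) (b := b) (e := if t then 1 else 0)
    (by split_ifs <;> omega) (by omega) (by omega) P Q
  have hcond : ∀ j k : ℕ, ((t = true ∧ j ≤ k) ∨ (t = false ∧ j < k)) ↔
      j < k + (if t then 1 else 0) := by
    intro j k; cases t <;> simp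
  simp_rw [hcond, h,
    show (b : ℤ) + ((if t then 1 else 0 : ℕ) : ℤ) = a + d by exact_mod_cast hstep]
  push_cast
  rfl

theorem sum_interlacing_differences_eq (v : ℤ → ℕ) (τ : ℤ → Bool) (L : ℤ → ℕ → ℤ)
    {lo hi : ℤ} (hle : lo ≤ hi) (hlo : v (lo - 1) = 0) (hhi : v (hi + 1) = 0)
    (hstep : ∀ i, v (i + 1) + (if τ i then 1 else 0) = v i + if i < 0 then 1 else 0) :
    (∑ i ∈ Icc lo (hi - 1), ∑ j ∈ Icc 1 (v i), ∑ k ∈ Icc 1 (v (i + 1)),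
        (if (τ i = true ∧ j ≤ k) ∨ (τ i = false ∧ j < k) then L i j - L (i + 1) k else 0))
      + ∑ i ∈ Icc lo hi, ∑ j ∈ Icc 1 (v i), ∑ k ∈ Icc 1 (v i),
          (if j < k then L i k - L i j else 0)
      = - ∑ i ∈ Icc lo hi,
          ((v (i - 1) : ℤ) - v i + if i = 0 then 1 else 0) * ∑ j ∈ Icc 1 (v i), L i j := by
  -- `X i` and `Y (i + 1)` are what `L i` and `L (i + 1)` contribute to the cross sum at level `i`.
  set X : ℤ → ℤ := fun i =>
    ∑ j ∈ Icc 1 (v i), ((v i : ℤ) + ((if i < 0 then 1 else 0 : ℕ) : ℤ) - j) * L i j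
  set Y : ℤ → ℤ := fun i =>
    ∑ k ∈ Icc 1 (v i), ((k : ℤ) + (if τ (i - 1) then 1 else 0) - 1) * L i k
  have hcross : ∀ i, ∑ j ∈ Icc 1 (v i), ∑ k ∈ Icc 1 (v (i + 1)),
      (if (τ i = true ∧ j ≤ k) ∨ (τ i = false ∧ j < k) then L i j - L (i + 1) k else 0) =
        X i - Y (i + 1) := fun i => by
    rw [sum_Icc_sum_Icc_ite_interlace (by split_ifs <;> simp) (hstep i)]
    simp only [X, Y, add_sub_cancel_right]
  have hXhi : X hi = 0 := by
    simpa [hhi, Y] using (hcross hi).symm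
  have hYlo : Y lo = 0 := by
    simpa [hlo, X] using hcross (lo - 1)
  rw [sum_congr rfl fun i _ => hcross i, sum_Icc_sub_succ_eq hle, hXhi, hYlo, sub_zero, add_zero,
    ← sum_add_distrib, ← sum_neg_distrib]
  refine sum_congr rfl fun i _ => ?_
  have hprev : ((v i + if τ (i - 1) then 1 else 0 : ℕ) : ℤ) =
      v (i - 1) + if i - 1 < 0 then 1 else 0 := by
    exact_mod_cast sub_add_cancel i 1 ▸ hstep (i - 1)
  simp only [X, Y, sum_Icc_sum_Icc_ite_lt_sub, ← sum_sub_distrib, ← sum_add_distrib, mul_sum,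
    ← sum_neg_distrib]
  refine sum_congr rfl fun j _ => ?_
  push_cast at hprev ⊢
  split_ifs at hprev ⊢ <;> first | omega | linear_combination -L i j * hprev

theorem stmt_9_general (lam : ℕ → ℕ) (hanti : Antitone lam) (hfin : ∃ N, lam N = 0)
    (v : ℤ → ℕ)
    (hv : ∀ c : ℤ, v c = Nat.card
      {p : ℕ × ℕ | 1 ≤ p.1 ∧ 1 ≤ p.2 ∧ p.2 ≤ lam p.1 ∧ (p.2 : ℤ) - (p.1 : ℤ) = c})
    (r s : ℕ)
    (hsupp : ∀ i : ℤ, v i ≠ 0 ↔ (-(r : ℤ) ≤ i ∧ i ≤ (s : ℤ)))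
    (τ : ℤ → Bool)
    (hτ : ∀ i : ℤ, τ i = true ↔
      ((0 ≤ i ∧ (v i : ℤ) = (v (i + 1) : ℤ) + 1) ∨ (i < 0 ∧ v i = v (i + 1))))
    (L : ℤ → ℕ → ℕ) :
    (∑ i ∈ Finset.Icc (-(r : ℤ)) ((s : ℤ) - 1), ∑ j ∈ Finset.Icc 1 (v i),
        ∑ k ∈ Finset.Icc 1 (v (i + 1)),
          (if (τ i = true ∧ j ≤ k) ∨ (τ i = false ∧ j < k)
            then (L i j : ℤ) - (L (i + 1) k : ℤ) else 0))
      + (∑ i ∈ Finset.Icc (-(r : ℤ)) (s : ℤ), ∑ j ∈ Finset.Icc 1 (v i),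
          ∑ k ∈ Finset.Icc 1 (v i), (if j < k then (L i k : ℤ) - (L i j : ℤ) else 0))
      = - ∑ i ∈ Finset.Icc (-(r : ℤ)) (s : ℤ),
          ((v (i - 1) : ℤ) - (v i : ℤ) + (if i = 0 then 1 else 0)) *
            ∑ j ∈ Finset.Icc 1 (v i), (L i j : ℤ) := by
  have hvanish : ∀ i, ¬(-(r : ℤ) ≤ i ∧ i ≤ s) → v i = 0 :=
    fun i => not_imp_comm.mp (hsupp i).mp
  refine sum_interlacing_differences_eq v τ (fun i j => (L i j : ℤ)) (by omega)
    (hvanish _ (by omega)) (hvanish _ (by omega)) fun i => ?_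
  obtain rfl : v = contentMultiplicity lam := funext hv
  have hup := contentMultiplicity_succ_le hanti hfin i
  have hdown := le_contentMultiplicity_succ hanti hfin i
  have hτi := hτ i
  cases h : τ i <;>
    simp only [h, true_iff, Bool.false_eq_true, false_iff, not_or, not_and, ↓reduceIte]
      at hτi ⊢ <;>
    split_ifs at hup hdown ⊢ <;> omega

/-- The key combinatorial lemma in the proof of the main theorem. Let `λ` be a
nonempty Young diagram (rows 1-indexed: box `(a,b)` belongs iff `1 ≤ b ≤ lam a`,
content `b - a`) with content multiplicities `vᵢ`, supported exactly on `-r ≤ i ≤ s`.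
Let `τ(i) = +` (true) iff `(i ≥ 0 and vᵢ = v_{i+1} + 1)` or `(i < 0 and vᵢ = v_{i+1})`.
Let `(λ^{-r}, …, λ^s)` (encoded `L i j` = `j`-th part of `λ^i`, `j ≥ 1`) interlace
according to the shape of `λ`: `τ(i) = + ⟹ λ^i ≻ λ^{i+1}`, `τ(i) = - ⟹ λ^i ≺ λ^{i+1}`,
and `λ^i` has at most `vᵢ` parts. Then
`Σ_{i=-r}^{s-1} Σ_{j=1}^{vᵢ} Σ_{k : j <_{τ(i)} k ≤ v_{i+1}} (λ^i_j - λ^{i+1}_k)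
 + Σ_{i=-r}^{s} Σ_{1 ≤ j < k ≤ vᵢ} (λ^i_k - λ^i_j) = - Σ_{i=-r}^{s} σ̂_λ(i) |λ^i|`,
where `σ̂_λ(i) = v_{i-1} - vᵢ + δ_{i,0}`, `<_-` is `<` and `<_+` is `≤`. -/
theorem stmt_9 (lam : ℕ → ℕ) (hanti : Antitone lam) (hfin : ∃ N, lam N = 0)
    (hne : 1 ≤ lam 1)
    (v : ℤ → ℕ)
    (hv : ∀ c : ℤ, v c = Nat.card
      {p : ℕ × ℕ | 1 ≤ p.1 ∧ 1 ≤ p.2 ∧ p.2 ≤ lam p.1 ∧ (p.2 : ℤ) - (p.1 : ℤ) = c})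
    (r s : ℕ)
    (hsupp : ∀ i : ℤ, v i ≠ 0 ↔ (-(r : ℤ) ≤ i ∧ i ≤ (s : ℤ)))
    (τ : ℤ → Bool)
    (hτ : ∀ i : ℤ, τ i = true ↔
      ((0 ≤ i ∧ (v i : ℤ) = (v (i + 1) : ℤ) + 1) ∨ (i < 0 ∧ v i = v (i + 1))))
    (L : ℤ → ℕ → ℕ)
    (hLdec : ∀ (i : ℤ) (j : ℕ), 1 ≤ j → L i (j + 1) ≤ L i j)
    (hLlen : ∀ (i : ℤ) (j : ℕ), v i < j → L i j = 0)
    (hLint : ∀ i : ℤ, -(r : ℤ) ≤ i → i < (s : ℤ) → ∀ j : ℕ, 1 ≤ j →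
      (τ i = true → L (i + 1) j ≤ L i j ∧ L i (j + 1) ≤ L (i + 1) j) ∧
      (τ i = false → L i j ≤ L (i + 1) j ∧ L (i + 1) (j + 1) ≤ L i j)) :
    (∑ i ∈ Finset.Icc (-(r : ℤ)) ((s : ℤ) - 1), ∑ j ∈ Finset.Icc 1 (v i),
        ∑ k ∈ Finset.Icc 1 (v (i + 1)),
          (if (τ i = true ∧ j ≤ k) ∨ (τ i = false ∧ j < k)
            then (L i j : ℤ) - (L (i + 1) k : ℤ) else 0))
      + (∑ i ∈ Finset.Icc (-(r : ℤ)) (s : ℤ), ∑ j ∈ Finset.Icc 1 (v i),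
          ∑ k ∈ Finset.Icc 1 (v i), (if j < k then (L i k : ℤ) - (L i j : ℤ) else 0))
      = - ∑ i ∈ Finset.Icc (-(r : ℤ)) (s : ℤ),
          ((v (i - 1) : ℤ) - (v i : ℤ) + (if i = 0 then 1 else 0)) *
            ∑ j ∈ Finset.Icc 1 (v i), (L i j : ℤ) :=
  stmt_9_general lam hanti hfin v hv r s hsupp τ hτ L
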